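/- Fix an integer k ≥ 1 and write g_n(x) = P(N_{n,k} = x), with the convention g_n(x) = 0 for x < 0 and g_m(x) = 0 for m < 0. Then for all integers n > k and x ≥ 0, g_n(x) = g_{n−1}(x) + p^k·g_{n−k}(x−1) − p^k·q·g_{n−k−1}(x) − p^{k+1}·g_{n−k−1}(x−1), together with the initial conditions g_n(x) = 1 if x = 0 and 0 otherwise for 0 ≤ n < k, and g_k(0) = 1 − p^k, g_k(1) = p^k, g_k(x) = 0 for x ≥ 2. -/

import Mathlib

open MeasureTheory Finset

/-- One step of Feller's counting-from-scratch scheme: the state is the pair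
`(number of completed runs of length k counted so far, length of the current streak
of successes since the last reset)`.  When the streak reaches `k`, a run is counted
and the counting starts anew from scratch. -/
def fellerAux (k : ℕ) (ω : ℕ → Bool) : ℕ → ℕ × ℕ
  | 0 => (0, 0)
  | n + 1 =>
    let cs := fellerAux k ω n
    if ω (n + 1) = true then
      if cs.2 + 1 = k then (cs.1 + 1, 0) else (cs.1, cs.2 + 1)
    else (cs.1, 0)

/-- `fellerCount k n ω` is `N_{n,k}`: the number of non-overlapping success runs of
length `k` among trials `1, …, n`, counted by Feller's counting-from-scratch scheme
(equivalently, `∑ⱼ ⌊mⱼ/k⌋` over the maximal success runs `mⱼ`). -/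
def fellerCount (k n : ℕ) (ω : ℕ → Bool) : ℕ := (fellerAux k ω n).1

/-!
Feller's scheme is an automaton on the states `(c, j)`: `c` runs counted so far and a current
streak of `j < k` successes. Write `A n x = P(N_{n,k} = x)` and `E n x` for the probability of
the state `(x, 0)` after `n` trials. A streak of length `j` at time `n` consists of `j` successes
following an empty streak at time `n - j`, so the state `(x, j)` has probability `p^j E (n - j) x`.
Conditioning on the last trial therefore gives
`E n x = q A (n-1) x + p^k E (n-k) (x-1)` and `A n x = A (n-1) x + p^k (E (n-k) (x-1) - E (n-k) x)`.
Eliminating `E` between the second identity at times `n` and `n - k` and the first at time `n - k`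
gives the recurrence; at times `n ≤ k` the second identity gives the initial values.
-/

namespace FellerRuns

section Automaton

variable (k : ℕ) {n : ℕ}

def step (s : ℕ × ℕ) (b : Bool) : ℕ × ℕ :=
  if b then (if s.2 + 1 = k then (s.1 + 1, 0) else (s.1, s.2 + 1)) else (s.1, 0)

def state : {n : ℕ} → (Fin n → Bool) → ℕ × ℕ
  | 0, _ => (0, 0)
  | n + 1, v => step k (state (Fin.init v)) (v (Fin.last n))

def trials (n : ℕ) (ω : ℕ → Bool) : Fin n → Bool := fun i => ω (i + 1)

lemma state_snoc (v : Fin n → Bool) (b : Bool) :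
    state k (Fin.snoc v b : Fin (n + 1) → Bool) = step k (state k v) b := by
  simp [state]

lemma fellerAux_eq_state (ω : ℕ → Bool) : ∀ n, fellerAux k ω n = state k (trials n ω)
  | 0 => rfl
  | n + 1 => by
    rw [state, show Fin.init (trials (n + 1) ω) = trials n ω from rfl, ← fellerAux_eq_state ω n]
    rfl

variable {k}

lemma step_false_eq_iff {s : ℕ × ℕ} {c j : ℕ} : step k s false = (c, j) ↔ s.1 = c ∧ j = 0 := by
  grind [step]

lemma step_true_ne_zero_zero (s : ℕ × ℕ) : step k s true ≠ (0, 0) := by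
  grind [step]

lemma step_true_eq_succ_zero_iff (hk : 0 < k) {s : ℕ × ℕ} {c : ℕ} :
    step k s true = (c + 1, 0) ↔ s = (c, k - 1) := by
  grind [step]

lemma step_true_eq_iff {s : ℕ × ℕ} {c j : ℕ} (hj : j + 1 ≠ k) :
    step k s true = (c, j + 1) ↔ s = (c, j) := by
  grind [step]

lemma state_snd_lt (hk : 0 < k) : ∀ {n} (v : Fin n → Bool), (state k v).2 < k
  | 0, _ => hk
  | _ + 1, v => by
    have := state_snd_lt hk (Fin.init v)
    rw [state, step]
    split_ifs <;> omega

end Automaton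

section Weights

variable (p : ℝ) {n : ℕ}

def weight (v : Fin n → Bool) : ℝ := ∏ i, if v i then p else 1 - p

def prob (P : (Fin n → Bool) → Prop) [DecidablePred P] : ℝ := ∑ v with P v, weight p v

variable {p}

lemma weight_nonneg (hp0 : 0 ≤ p) (hp1 : p ≤ 1) (v : Fin n → Bool) : 0 ≤ weight p v :=
  prod_nonneg fun _ _ => by split_ifs <;> linarith

lemma weight_snoc (v : Fin n → Bool) (b : Bool) :
    weight p (Fin.snoc v b : Fin (n + 1) → Bool) = weight p v * if b then p else 1 - p := by
  simp [weight, Fin.prod_univ_castSucc]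

lemma prob_congr {P Q : (Fin n → Bool) → Prop} [DecidablePred P] [DecidablePred Q]
    (h : ∀ v, P v ↔ Q v) : prob p P = prob p Q := by
  rw [prob, prob, filter_congr fun v _ => h v]

lemma prob_eq_zero {P : (Fin n → Bool) → Prop} [DecidablePred P] (h : ∀ v, ¬P v) :
    prob p P = 0 := by
  rw [prob, filter_false_of_mem fun v _ => h v, sum_empty]

lemma prob_fin_zero (P : (Fin 0 → Bool) → Prop) [DecidablePred P] (v : Fin 0 → Bool) :
    prob p P = if P v then 1 else 0 := by
  rw [prob, sum_filter, Fintype.sum_subsingleton _ v, weight, univ_eq_empty, prod_empty]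

lemma prob_succ (P : (Fin (n + 1) → Bool) → Prop) [DecidablePred P] :
    prob p P = (1 - p) * prob p (fun v => P (Fin.snoc v false))
      + p * prob p (fun v => P (Fin.snoc v true)) := by
  simp only [prob, sum_filter, mul_sum]
  rw [← Equiv.sum_comp (Fin.snocEquiv fun _ => Bool), Fintype.sum_prod_type_right,
    ← sum_add_distrib]
  refine sum_congr rfl fun v _ => ?_
  simp only [Fintype.sum_bool, Fin.snocEquiv, Equiv.coe_fn_mk, weight_snoc, if_true,
    Bool.false_eq_true, if_false, mul_ite, mul_zero, zero_mul, mul_comm, add_comm]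

end Weights

section Measure

variable {p : ℝ} {μ : Measure (ℕ → Bool)}

def IsBernoulliProduct (p : ℝ) (μ : Measure (ℕ → Bool)) : Prop :=
  ∀ (n : ℕ) (b : ℕ → Bool), μ {ω | ∀ i, 1 ≤ i → i ≤ n → ω i = b i}
    = ENNReal.ofReal (∏ i ∈ Icc 1 n, if b i = true then p else 1 - p)

lemma measurable_trials (n : ℕ) : Measurable (trials n) :=
  measurable_pi_lambda _ fun _ => measurable_pi_apply _

lemma measure_trials_preimage (hμ : IsBernoulliProduct p μ) {n : ℕ} (v : Fin n → Bool) :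
    μ (trials n ⁻¹' {v}) = ENNReal.ofReal (weight p v) := by
  obtain ⟨b, rfl⟩ : ∃ b, trials n b = v :=
    ⟨fun i => if h : i - 1 < n then v ⟨i - 1, h⟩ else false, funext fun i => by simp [trials]⟩
  have hcyl : trials n ⁻¹' {trials n b} = {ω | ∀ i, 1 ≤ i → i ≤ n → ω i = b i} := by
    ext ω
    simp only [Set.mem_preimage, Set.mem_singleton_iff, funext_iff, trials, Set.mem_ofPred_eq]
    refine ⟨fun h i hi1 hin => ?_, fun h i => h _ (by omega) (by omega)⟩
    simpa [Nat.sub_add_cancel hi1] using h ⟨i - 1, by omega⟩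
  rw [hcyl, hμ, weight, ← Ico_add_one_right_eq_Icc, ← zero_add 1, ← prod_Ico_add',
    ← range_eq_Ico, ← Fin.prod_univ_eq_prod_range (fun i => if b (i + 1) then p else 1 - p)]
  rfl

lemma toReal_measure_trials (hp0 : 0 ≤ p) (hp1 : p ≤ 1) (hμ : IsBernoulliProduct p μ) {n : ℕ}
    (P : (Fin n → Bool) → Prop) [DecidablePred P] :
    (μ {ω | P (trials n ω)}).toReal = prob p P := by
  rw [show {ω | P (trials n ω)} = trials n ⁻¹' ↑(univ.filter P) by ext; simp,
    ← Measure.map_apply (measurable_trials n) (Set.toFinite _).measurableSet,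
    ← sum_measure_singleton, sum_congr rfl fun v _ =>
      (Measure.map_apply (measurable_trials n) (measurableSet_singleton v)).trans
        (measure_trials_preimage hμ v),
    ← ENNReal.ofReal_sum_of_nonneg fun v _ => weight_nonneg hp0 hp1 v,
    ENNReal.toReal_ofReal (sum_nonneg fun v _ => weight_nonneg hp0 hp1 v)]
  rfl

end Measure

section StateProb

variable (p : ℝ) (k : ℕ) {n : ℕ}

def stateProb (n : ℕ) (s : ℕ × ℕ) : ℝ := prob p fun v : Fin n → Bool => state k v = s

def countProb (n c : ℕ) : ℝ := prob p fun v : Fin n → Bool => (state k v).1 = c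

variable {p k}

lemma toReal_measure_fellerCount (hp0 : 0 ≤ p) (hp1 : p ≤ 1) {μ : Measure (ℕ → Bool)}
    (hμ : IsBernoulliProduct p μ) (n x : ℕ) :
    (μ {ω | fellerCount k n ω = x}).toReal = countProb p k n x := by
  simp only [fellerCount, fellerAux_eq_state]
  exact toReal_measure_trials hp0 hp1 hμ fun v => (state k v).1 = x

lemma stateProb_succ (s : ℕ × ℕ) :
    stateProb p k (n + 1) s
      = (1 - p) * prob p (fun v : Fin n → Bool => step k (state k v) false = s)
        + p * prob p (fun v : Fin n → Bool => step k (state k v) true = s) := by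
  simp only [stateProb, prob_succ, state_snoc]

lemma stateProb_succ_zero_zero : stateProb p k (n + 1) (0, 0) = (1 - p) * countProb p k n 0 := by
  rw [stateProb_succ, prob_eq_zero fun v => step_true_ne_zero_zero _, mul_zero, add_zero]
  exact congrArg _ (prob_congr fun v => by simp [step_false_eq_iff])

lemma stateProb_succ_succ_zero (hk : 0 < k) (c : ℕ) :
    stateProb p k (n + 1) (c + 1, 0)
      = (1 - p) * countProb p k n (c + 1) + p * stateProb p k n (c, k - 1) := by
  rw [stateProb_succ]
  congr 2
  · exact prob_congr fun v => by simp [step_false_eq_iff]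
  · exact prob_congr fun v => step_true_eq_succ_zero_iff hk

lemma stateProb_succ_succ {j : ℕ} (hj : j + 1 ≠ k) (c : ℕ) :
    stateProb p k (n + 1) (c, j + 1) = p * stateProb p k n (c, j) := by
  rw [stateProb_succ, prob_eq_zero fun v => by simp [step_false_eq_iff], mul_zero, zero_add]
  exact congrArg _ (prob_congr fun v => step_true_eq_iff hj)

lemma stateProb_add {j : ℕ} (c m : ℕ) : ∀ i, j + i < k →
    stateProb p k (m + i) (c, j + i) = p ^ i * stateProb p k m (c, j)
  | 0, _ => by simp
  | i + 1, h => by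
    rw [← add_assoc, ← add_assoc, stateProb_succ_succ (by omega), stateProb_add c m i (by omega),
      pow_succ']
    ring

lemma stateProb_eq_zero_of_lt {j : ℕ} (hj : j < k) (hn : n < j) (c : ℕ) :
    stateProb p k n (c, j) = 0 := by
  obtain ⟨i, rfl⟩ : ∃ i, j = i + 1 + n := ⟨j - n - 1, by omega⟩
  have h := stateProb_add (p := p) (j := i + 1) c 0 n hj
  rw [zero_add] at h
  rw [h, stateProb, prob_fin_zero _ Fin.elim0, if_neg (by simp [state]), mul_zero]

lemma countProb_eq_sum_stateProb (hk : 0 < k) (c : ℕ) :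
    countProb p k n c = ∑ j ∈ range k, stateProb p k n (c, j) := by
  rw [countProb, prob, ← sum_fiberwise_of_maps_to (g := fun v => (state k v).2) (t := range k)
    fun v _ => mem_range.2 (state_snd_lt hk v)]
  refine sum_congr rfl fun j _ => ?_
  rw [stateProb, prob, filter_filter]
  exact congrArg₂ _ (filter_congr fun v _ => by simp [Prod.ext_iff]) rfl

lemma countProb_succ (hk : 0 < k) (c : ℕ) :
    countProb p k (n + 1) c
      = stateProb p k (n + 1) (c, 0) + p * (countProb p k n c - stateProb p k n (c, k - 1)) := by
  obtain ⟨k, rfl⟩ : ∃ k', k = k' + 1 := ⟨k - 1, by omega⟩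
  rw [countProb_eq_sum_stateProb hk, countProb_eq_sum_stateProb hk, sum_range_succ',
    sum_range_succ, sum_congr rfl fun j hj => stateProb_succ_succ (by simp at hj; omega) c,
    ← mul_sum]
  simp only [add_tsub_cancel_right]
  ring

end StateProb

def extendByZero (f : ℕ → ℕ → ℝ) (n x : ℤ) : ℝ :=
  if 0 ≤ n ∧ 0 ≤ x then f n.toNat x.toNat else 0

section ExtendByZero

variable {f : ℕ → ℕ → ℝ}

@[simp]
lemma extendByZero_natCast (n x : ℕ) : extendByZero f n x = f n x := by
  simp [extendByZero]

lemma extendByZero_of_neg {n x : ℤ} (h : n < 0 ∨ x < 0) : extendByZero f n x = 0 :=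
  if_neg (by omega)

lemma eq_extendByZero {G : ℤ → ℤ → ℝ} (hneg : ∀ n x : ℤ, n < 0 ∨ x < 0 → G n x = 0)
    (hnat : ∀ n x : ℕ, G n x = f n x) : G = extendByZero f := by
  ext n x
  rcases lt_or_ge n 0 with hn | hn
  · rw [hneg n x (.inl hn), extendByZero_of_neg (.inl hn)]
  rcases lt_or_ge x 0 with hx | hx
  · rw [hneg n x (.inr hx), extendByZero_of_neg (.inr hx)]
  lift n to ℕ using hn
  lift x to ℕ using hx
  rw [hnat, extendByZero_natCast]

lemma extendByZero_zero_left (h : ∀ x : ℕ, f 0 x = if x = 0 then 1 else 0) (x : ℤ) :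
    extendByZero f 0 x = if x = 0 then 1 else 0 := by
  rcases lt_or_ge x 0 with hx | hx
  · rw [extendByZero_of_neg (.inr hx), if_neg hx.ne]
  lift x to ℕ using hx
  simpa [h] using extendByZero_natCast (f := f) 0 x

end ExtendByZero

section Recurrence

variable {p : ℝ} {k : ℕ}

local notation "A" => extendByZero (countProb p k)
local notation "E" => extendByZero fun n c => stateProb p k n (c, 0)

lemma mul_stateProb_pred (hk : 0 < k) (t c : ℕ) :
    p * stateProb p k t (c, k - 1) = p ^ k * E ((t + 1 : ℕ) - k) c := by
  rcases le_or_gt k (t + 1) with hkt | hkt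
  · obtain ⟨m, rfl⟩ : ∃ m, t = m + (k - 1) := ⟨t + 1 - k, by omega⟩
    have h := stateProb_add (p := p) (k := k) (j := 0) c m (k - 1) (by omega)
    rw [zero_add] at h
    rw [h, show ((m + (k - 1) + 1 : ℕ) : ℤ) - k = m by omega, extendByZero_natCast, ← mul_assoc,
      ← pow_succ', Nat.sub_add_cancel hk]
  · rw [stateProb_eq_zero_of_lt (by omega) (by omega), extendByZero_of_neg (.inl (by omega)),
      mul_zero, mul_zero]

lemma emptyStreak_eq (hk : 0 < k) {m : ℤ} (hm : 1 ≤ m) (y : ℤ) :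
    E m y = (1 - p) * A (m - 1) y + p ^ k * E (m - k) (y - 1) := by
  lift m to ℕ using by omega
  obtain ⟨t, rfl⟩ : ∃ t, m = t + 1 := ⟨m - 1, by omega⟩
  rcases lt_or_ge y 0 with hy | hy
  · simp [extendByZero_of_neg (.inr hy), extendByZero_of_neg (.inr (by omega : y - 1 < 0))]
  lift y to ℕ using hy
  rw [show ((t + 1 : ℕ) : ℤ) - 1 = t by omega, extendByZero_natCast, extendByZero_natCast]
  rcases y with _ | c
  · rw [stateProb_succ_zero_zero, extendByZero_of_neg (.inr (by omega)), mul_zero, add_zero]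
  · rw [stateProb_succ_succ_zero hk, show ((c + 1 : ℕ) : ℤ) - 1 = c by omega,
      mul_stateProb_pred hk]

lemma countProb_eq_emptyStreak (hk : 0 < k) {m : ℤ} (hm : 1 ≤ m) (y : ℤ) :
    A m y = E m y + p * A (m - 1) y - p ^ k * E (m - k) y := by
  lift m to ℕ using by omega
  obtain ⟨t, rfl⟩ : ∃ t, m = t + 1 := ⟨m - 1, by omega⟩
  rcases lt_or_ge y 0 with hy | hy
  · simp [extendByZero_of_neg (.inr hy)]
  lift y to ℕ using hy
  rw [show ((t + 1 : ℕ) : ℤ) - 1 = t by omega, extendByZero_natCast, extendByZero_natCast,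
    extendByZero_natCast, countProb_succ hk, mul_sub, mul_stateProb_pred hk]
  ring

lemma countProb_eq_pred_add (hk : 0 < k) {m : ℤ} (hm : 1 ≤ m) (y : ℤ) :
    A m y = A (m - 1) y + p ^ k * (E (m - k) (y - 1) - E (m - k) y) := by
  rw [countProb_eq_emptyStreak hk hm, emptyStreak_eq hk hm]
  ring

lemma countProb_recurrence (hk : 0 < k) {n : ℤ} (hn : k < n) (x : ℤ) :
    A n x = A (n - 1) x + p ^ k * A (n - k) (x - 1) - p ^ k * (1 - p) * A (n - k - 1) x
      - p ^ (k + 1) * A (n - k - 1) (x - 1) := by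
  have h₁ := countProb_eq_pred_add (p := p) hk (m := n) (by omega) x
  have h₂ := emptyStreak_eq (p := p) hk (m := n - k) (by omega) x
  have h₃ := emptyStreak_eq (p := p) hk (m := n - k) (by omega) (x - 1)
  have h₄ := countProb_eq_pred_add (p := p) hk (m := n - k) (by omega) (x - 1)
  linear_combination h₁ + p ^ k * h₃ - p ^ k * h₂ - p ^ k * h₄

lemma countProb_zero_left (x : ℤ) : A 0 x = if x = 0 then 1 else 0 :=
  extendByZero_zero_left (fun x => by simp [countProb, prob_fin_zero _ Fin.elim0, state, eq_comm]) x

lemma emptyStreak_zero_left (x : ℤ) : E 0 x = if x = 0 then 1 else 0 :=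
  extendByZero_zero_left (fun x => by simp [stateProb, prob_fin_zero _ Fin.elim0, state, eq_comm]) x

lemma countProb_of_lt (hk : 0 < k) (x : ℤ) : ∀ n : ℕ, n < k → A n x = A 0 x
  | 0, _ => rfl
  | n + 1, hn => by
    have hneg : (n : ℤ) + 1 - k < 0 := by omega
    rw [Nat.cast_succ, countProb_eq_pred_add hk (m := n + 1) (by omega), add_sub_cancel_right,
      extendByZero_of_neg (.inl hneg), extendByZero_of_neg (.inl hneg), sub_self, mul_zero,
      add_zero, countProb_of_lt hk x n (by omega)]

lemma countProb_self (hk : 0 < k) (x : ℤ) :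
    A k x = (if x = 0 then 1 else 0)
      + p ^ k * ((if x - 1 = 0 then 1 else 0) - if x = 0 then 1 else 0) := by
  rw [countProb_eq_pred_add hk (by omega), sub_self, ← Nat.cast_pred hk,
    countProb_of_lt hk x _ (by omega), countProb_zero_left, emptyStreak_zero_left,
    emptyStreak_zero_left]

end Recurrence

end FellerRuns

theorem stmt18_general (p : ℝ) (hp0 : 0 < p) (hp1 : p < 1) (k : ℕ) (hk : 1 ≤ k)
    (μ : Measure (ℕ → Bool))
    (hμ : ∀ (n : ℕ) (b : ℕ → Bool),
      μ {ω | ∀ i, 1 ≤ i → i ≤ n → ω i = b i}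
        = ENNReal.ofReal (∏ i ∈ Finset.Icc 1 n, if b i = true then p else 1 - p))
    -- `G n x = P(N_{n,k} = x)`, extended by `0` to negative indices.
    (G : ℤ → ℤ → ℝ) (hGneg : ∀ n x : ℤ, n < 0 ∨ x < 0 → G n x = 0)
    (hGdef : ∀ n x : ℕ, G n x = (μ {ω | fellerCount k n ω = x}).toReal) :
    (∀ (n x : ℕ), k < n →
      G n x = G ((n : ℤ) - 1) x + p ^ k * G ((n : ℤ) - k) ((x : ℤ) - 1)
        - p ^ k * (1 - p) * G ((n : ℤ) - k - 1) x
        - p ^ (k + 1) * G ((n : ℤ) - k - 1) ((x : ℤ) - 1)) ∧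
    (∀ (n x : ℕ), n < k → G n x = if x = 0 then 1 else 0) ∧
    G k 0 = 1 - p ^ k ∧ G k 1 = p ^ k ∧
    (∀ x : ℕ, 2 ≤ x → G k x = 0) := by
  obtain rfl : G = FellerRuns.extendByZero (FellerRuns.countProb p k) :=
    FellerRuns.eq_extendByZero hGneg fun n x => by
      rw [hGdef, FellerRuns.toReal_measure_fellerCount hp0.le hp1.le hμ]
  have hself := FellerRuns.countProb_self (p := p) hk
  refine ⟨fun n x hn => FellerRuns.countProb_recurrence hk (by exact_mod_cast hn) x,
    fun n x hn => ?_, by simp [hself, sub_eq_add_neg], by simp [hself], fun x hx => ?_⟩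
  · simp [FellerRuns.countProb_of_lt hk _ n hn, FellerRuns.countProb_zero_left]
  · simp [hself, show x ≠ 0 by omega, show (x : ℤ) - 1 ≠ 0 by omega]

theorem stmt18 (p : ℝ) (hp0 : 0 < p) (hp1 : p < 1) (k : ℕ) (hk : 1 ≤ k)
    (μ : Measure (ℕ → Bool)) [IsProbabilityMeasure μ]
    (hμ : ∀ (n : ℕ) (b : ℕ → Bool),
      μ {ω | ∀ i, 1 ≤ i → i ≤ n → ω i = b i}
        = ENNReal.ofReal (∏ i ∈ Finset.Icc 1 n, if b i = true then p else 1 - p))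
    -- `G n x = P(N_{n,k} = x)`, extended by `0` to negative indices.
    (G : ℤ → ℤ → ℝ) (hGneg : ∀ n x : ℤ, n < 0 ∨ x < 0 → G n x = 0)
    (hGdef : ∀ n x : ℕ, G n x = (μ {ω | fellerCount k n ω = x}).toReal) :
    (∀ (n x : ℕ), k < n →
      G n x = G ((n : ℤ) - 1) x + p ^ k * G ((n : ℤ) - k) ((x : ℤ) - 1)
        - p ^ k * (1 - p) * G ((n : ℤ) - k - 1) x
        - p ^ (k + 1) * G ((n : ℤ) - k - 1) ((x : ℤ) - 1)) ∧
    (∀ (n x : ℕ), n < k → G n x = if x = 0 then 1 else 0) ∧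
    G k 0 = 1 - p ^ k ∧ G k 1 = p ^ k ∧
    (∀ x : ℕ, 2 ≤ x → G k x = 0) :=
  stmt18_general p hp0 hp1 k hk μ hμ G hGneg hGdef
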